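/- With E* uniform on (0,1), and the conditional density of Q* given E* = e* equal to f₁ (the density 5/4 on [1/10, 9/10]) when e* < 3/5 and f₂ (the density 5/2 on [0,1/10]∪[9/10,1], 5/8 on (1/10,9/10)) when e* ≥ 3/5, the conditional entropy of E* given Q* = q* equals 1 - log₂ 5 for q* ∈ [0,1/10) ∪ [9/10,1] and 9/4 - log₂ 5 for q* ∈ [1/10, 9/10). In particular h(E*|q*) is not constant in q*. -/

import Mathlib

/-! Splitting `(0,1)` at `3/5` reduces both the entropy and the marginal to weighted averages of
`f₁(q)` and `f₂(q)`; the densities take the values `5/2^k`, so every `log₂` is `log₂ 5 - k`. -/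

open MeasureTheory Set

/-- The density `f₁`: `5/4` on `[1/10, 9/10)`, `0` elsewhere (on `[0,1]`). -/
noncomputable def f1 (x : ℝ) : ℝ := if x ∈ Ico (1/10 : ℝ) (9/10) then 5/4 else 0

/-- The density `f₂` on `[0,1]`: `5/2` on `[0,1/10) ∪ [9/10,1]`, `5/8` on `[1/10, 9/10)`. -/
noncomputable def f2 (x : ℝ) : ℝ :=
  if x ∈ Ico (0:ℝ) (1/10) ∪ Icc (9/10 : ℝ) 1 then 5/2
  else if x ∈ Ico (1/10 : ℝ) (9/10) then 5/8 else 0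

/-- The joint density on `(0,1)²`: `f(q*, e*) = f₁(q*)` if `e* < 3/5`, `f₂(q*)` if `e* ≥ 3/5`. -/
noncomputable def jointQE (q e : ℝ) : ℝ := if e < 3/5 then f1 q else f2 q

/-- `h(E*|q*) = −∫₀¹ f(e*|q*) log₂ f(e*|q*) de*`; here the marginal of `Q*` is uniform,
so `f(e*|q*) = f(q*,e*)`. -/
noncomputable def hEgiven (q : ℝ) : ℝ :=
  -∫ e in Ioo (0:ℝ) 1, jointQE q e * Real.logb 2 (jointQE q e)

theorem setIntegral_Ioo_ite_lt {E : Type*} [NormedAddCommGroup E] [NormedSpace ℝ E]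
    [CompleteSpace E] {a b c : ℝ} (hac : a < c) (hcb : c ≤ b) (x y : E) :
    ∫ e in Ioo a b, (if e < c then x else y) = (c - a) • x + (b - c) • y := by
  have hleft : EqOn (fun e : ℝ => if e < c then x else y) (fun _ => x) (Ioo a c) :=
    fun e he => if_pos he.2
  have hright : EqOn (fun e : ℝ => if e < c then x else y) (fun _ => y) (Ico c b) :=
    fun e he => if_neg (not_lt.mpr he.1)
  have hdisj : Disjoint (Ioo a c) (Ico c b) :=
    disjoint_left.mpr fun e he he' => (not_lt.mpr he'.1) he.2
  rw [← Ioo_union_Ico_eq_Ioo hac hcb,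
    setIntegral_union hdisj measurableSet_Ico
      ((integrableOn_const (C := x) measure_Ioo_lt_top.ne).congr_fun hleft.symm measurableSet_Ioo)
      ((integrableOn_const (C := y) measure_Ico_lt_top.ne).congr_fun hright.symm measurableSet_Ico),
    setIntegral_congr_fun measurableSet_Ioo hleft, setIntegral_congr_fun measurableSet_Ico hright,
    setIntegral_const, setIntegral_const, Real.volume_real_Ioo_of_le hac.le,
    Real.volume_real_Ico_of_le hcb]

theorem Real.logb_div_pow_self {b : ℝ} (hb : 1 < b) {x : ℝ} (hx : x ≠ 0) (k : ℕ) :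
    Real.logb b (x / b ^ k) = Real.logb b x - k := by
  rw [Real.logb_div hx (pow_ne_zero _ (by positivity)), Real.logb_pow,
    Real.logb_self_eq_one hb, mul_one]

theorem integral_jointQE (q : ℝ) :
    ∫ e in Ioo (0:ℝ) 1, jointQE q e = 3/5 * f1 q + 2/5 * f2 q := by
  simp only [jointQE]
  rw [setIntegral_Ioo_ite_lt (by norm_num) (by norm_num)]
  norm_num

theorem hEgiven_eq (q : ℝ) :
    hEgiven q = -(3/5 * (f1 q * Real.logb 2 (f1 q)) + 2/5 * (f2 q * Real.logb 2 (f2 q))) := by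
  have hite : ∀ e, jointQE q e * Real.logb 2 (jointQE q e) =
      if e < 3/5 then f1 q * Real.logb 2 (f1 q) else f2 q * Real.logb 2 (f2 q) :=
    fun e => apply_ite (fun t => t * Real.logb 2 t) _ _ _
  rw [hEgiven, funext hite, setIntegral_Ioo_ite_lt (by norm_num) (by norm_num)]
  norm_num

section Values

variable {q : ℝ}

theorem f1_of_mem_outer (hq : q ∈ Ico (0:ℝ) (1/10) ∪ Icc (9/10 : ℝ) 1) : f1 q = 0 := by
  refine if_neg fun h => ?_
  rcases hq with h' | h'
  · exact not_le.mpr h'.2 h.1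
  · exact not_lt.mpr h'.1 h.2

theorem f2_of_mem_outer (hq : q ∈ Ico (0:ℝ) (1/10) ∪ Icc (9/10 : ℝ) 1) : f2 q = 5/2 :=
  if_pos hq

theorem f1_of_mem_middle (hq : q ∈ Ico (1/10 : ℝ) (9/10)) : f1 q = 5/4 :=
  if_pos hq

theorem f2_of_mem_middle (hq : q ∈ Ico (1/10 : ℝ) (9/10)) : f2 q = 5/8 := by
  have hout : q ∉ Ico (0:ℝ) (1/10) ∪ Icc (9/10 : ℝ) 1 := by
    rintro (h | h)
    · exact not_le.mpr h.2 hq.1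
    · exact not_lt.mpr h.1 hq.2
  rw [f2, if_neg hout, if_pos hq]

theorem hEgiven_of_mem_outer (hq : q ∈ Ico (0:ℝ) (1/10) ∪ Icc (9/10 : ℝ) 1) :
    hEgiven q = 1 - Real.logb 2 5 := by
  have hlog : Real.logb 2 (5/2) = Real.logb 2 5 - 1 := by
    simpa using Real.logb_div_pow_self one_lt_two (x := 5) (by norm_num) 1
  rw [hEgiven_eq, f1_of_mem_outer hq, f2_of_mem_outer hq, hlog]
  ring

theorem hEgiven_of_mem_middle (hq : q ∈ Ico (1/10 : ℝ) (9/10)) :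
    hEgiven q = 9/4 - Real.logb 2 5 := by
  have hlog4 : Real.logb 2 (5/4) = Real.logb 2 5 - 2 := by
    simpa [show (2:ℝ) ^ 2 = 4 by norm_num] using
      Real.logb_div_pow_self one_lt_two (x := 5) (by norm_num) 2
  have hlog8 : Real.logb 2 (5/8) = Real.logb 2 5 - 3 := by
    simpa [show (2:ℝ) ^ 3 = 8 by norm_num] using
      Real.logb_div_pow_self one_lt_two (x := 5) (by norm_num) 3
  rw [hEgiven_eq, f1_of_mem_middle hq, f2_of_mem_middle hq, hlog4, hlog8]
  ring

theorem integral_jointQE_eq_one (hq : q ∈ Icc (0:ℝ) 1) :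
    ∫ e in Ioo (0:ℝ) 1, jointQE q e = 1 := by
  rw [integral_jointQE]
  by_cases hmid : q ∈ Ico (1/10 : ℝ) (9/10)
  · rw [f1_of_mem_middle hmid, f2_of_mem_middle hmid]
    norm_num
  · have hout : q ∈ Ico (0:ℝ) (1/10) ∪ Icc (9/10 : ℝ) 1 := by
      rcases lt_or_ge q (1/10) with h | h
      · exact Or.inl ⟨hq.1, h⟩
      · exact Or.inr ⟨not_lt.mp fun h' => hmid ⟨h, h'⟩, hq.2⟩
    rw [f1_of_mem_outer hout, f2_of_mem_outer hout]
    norm_num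

end Values

/-- The marginal of `Q*` is uniform; `h(E*|q*)` equals `1 − log₂ 5` on
`[0,1/10) ∪ [9/10,1]` and `9/4 − log₂ 5` on `[1/10, 9/10)`; in particular it is
not constant in `q*`. -/
theorem stmt10 :
    (∀ q ∈ Icc (0:ℝ) 1, (∫ e in Ioo (0:ℝ) 1, jointQE q e) = 1)
    ∧ (∀ q ∈ Ico (0:ℝ) (1/10) ∪ Icc (9/10 : ℝ) 1, hEgiven q = 1 - Real.logb 2 5)
    ∧ (∀ q ∈ Ico (1/10 : ℝ) (9/10), hEgiven q = 9/4 - Real.logb 2 5)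
    ∧ ∃ q ∈ Icc (0:ℝ) 1, ∃ q' ∈ Icc (0:ℝ) 1, hEgiven q ≠ hEgiven q' := by
  refine ⟨fun q => integral_jointQE_eq_one, fun q => hEgiven_of_mem_outer,
    fun q => hEgiven_of_mem_middle, 0, by norm_num, 1/2, by norm_num, ?_⟩
  rw [hEgiven_of_mem_outer (Or.inl (by norm_num)), hEgiven_of_mem_middle (by norm_num)]
  norm_num
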